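/- Let (F, ζ) : (C, Ω) → (C', Ω') be a map of categories with V-faces. Then there exists a unique map C(F, ζ) : C(Ω) → C(Ω') of V-dressed coalgebras such that for every object X of C, (ζ_X ⊗ C(F, ζ)) ∘ δ^Ω_X = δ^{Ω'}_{F(X)} ∘ ζ_X. -/

import Mathlib

/-!
Contracting `δ_X(m)` with `m* ∈ Ω(X)*` in the first factor gives `κ_X(m* ⊗ m)`, and an element
of `Ω'(FX) ⊗ C(Ω')` is determined by all such contractions. Hence the square for `h` says exactly
`h (κ_X(m* ⊗ m)) = κ_{FX}(m* ζ_X⁻¹ ⊗ ζ_X m)`. Since the `κ_X` generate `C(Ω)` this determines `h`,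
and since the right-hand side is dinatural in `X` (naturality of `ζ`) it defines `h`. That `h` is a
map of `V`-dressed coalgebras is checked on generators, computing `Δ'` with the basis `ζ_X(b_j)`
of `Ω'(FX)` and using that `ζ` intertwines the `R`-actions.
-/

open TensorProduct


section Dressed

variable (K : Type) [Field K] (V : Type) [Fintype V] [DecidableEq V]

/-- An `E`-bimodule structure on a `K`-vector space, where `E = R̊ ⊗ R` is the
span of the orthogonal idempotents `λ̊μ` (indexed by `V × V`): commuting unital
left and right actions, encoded by the action operators of the idempotents. -/
structure EBim (C : Type) [AddCommGroup C] [Module K C] where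
  /-- left action of the idempotent `λ̊μ` -/
  eL : V × V → C →ₗ[K] C
  /-- right action of the idempotent `λ̊μ` -/
  eR : V × V → C →ₗ[K] C
  eL_orth : ∀ p q : V × V, eL p ∘ₗ eL q = if p = q then eL p else 0
  eR_orth : ∀ p q : V × V, eR p ∘ₗ eR q = if p = q then eR p else 0
  eLR_comm : ∀ p q : V × V, eL p ∘ₗ eR q = eR q ∘ₗ eL p
  sum_eL : ∑ p : V × V, eL p = LinearMap.id
  sum_eR : ∑ p : V × V, eR p = LinearMap.id

namespace EBim

variable {K V} {C : Type} [AddCommGroup C] [Module K C]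

/-- left action of `λ̊` -/
def oL (B : EBim K V C) (l : V) : C →ₗ[K] C := ∑ m : V, B.eL (l, m)

/-- left action of the "plain" element `μ` -/
def pL (B : EBim K V C) (m : V) : C →ₗ[K] C := ∑ l : V, B.eL (l, m)

/-- right action of `λ̊` -/
def oR (B : EBim K V C) (l : V) : C →ₗ[K] C := ∑ m : V, B.eR (l, m)

/-- right action of the "plain" element `μ` -/
def pR (B : EBim K V C) (m : V) : C →ₗ[K] C := ∑ l : V, B.eR (l, m)

end EBim

/-- A `V`-dressed coalgebra: a `K`-coalgebra with an `E`-bimodule structure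
satisfying the compatibilities (9)–(11) of Hayashi's paper. -/
structure DressedStruct (C : Type) [AddCommGroup C] [Module K C]
    extends EBim K V C where
  comul : C →ₗ[K] C ⊗[K] C
  counit : C →ₗ[K] K
  coassoc : ∀ c : C,
    (TensorProduct.assoc K C C C) ((TensorProduct.map comul LinearMap.id) (comul c)) =
      (TensorProduct.map LinearMap.id comul) (comul c)
  counit_comul : ∀ c : C,
    (TensorProduct.lid K C) ((TensorProduct.map counit LinearMap.id) (comul c)) = c
  comul_counit : ∀ c : C,
    (TensorProduct.rid K C) ((TensorProduct.map LinearMap.id counit) (comul c)) = c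
  /-- `Δ(λ̊μ c λ̊'μ') = Σ λ̊ c₍₁₎ λ̊' ⊗ μ c₍₂₎ μ'` -/
  comul_act : ∀ (p q : V × V) (c : C),
    comul (eL p (eR q c)) =
      (TensorProduct.map (toEBim.oL p.1 ∘ₗ toEBim.oR q.1)
        (toEBim.pL p.2 ∘ₗ toEBim.pR q.2)) (comul c)
  /-- `Σ λ c₍₁₎ μ ⊗ c₍₂₎ = Σ c₍₁₎ ⊗ λ̊ c₍₂₎ μ̊` -/
  exch : ∀ (l m : V) (c : C),
    (TensorProduct.map (toEBim.pL l ∘ₗ toEBim.pR m) LinearMap.id) (comul c) =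
      (TensorProduct.map LinearMap.id (toEBim.oL l ∘ₗ toEBim.oR m)) (comul c)
  /-- `ε(λ̊ c μ̊) = ε(λ c μ)` -/
  counit_act : ∀ (l m : V) (c : C),
    counit (toEBim.oL l (toEBim.oR m c)) = counit (toEBim.pL l (toEBim.pR m c))

/-- `f` is a map of `V`-dressed coalgebras (a coalgebra map which is also an
`E`-bimodule map). -/
def IsDrMap {C D : Type} [AddCommGroup C] [Module K C] [AddCommGroup D] [Module K D]
    (DC : DressedStruct K V C) (DD : DressedStruct K V D) (f : C →ₗ[K] D) : Prop :=
  (∀ c : C, DD.comul (f c) = (TensorProduct.map f f) (DC.comul c)) ∧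
  (∀ c : C, DD.counit (f c) = DC.counit c) ∧
  (∀ (p : V × V) (c : C), f (DC.eL p c) = DD.eL p (f c)) ∧
  (∀ (p : V × V) (c : C), f (DC.eR p c) = DD.eR p (f c))

/-- The subspace of `C ⊗[K] D` by which one divides to obtain the tensor
product `C ⊗_E D` of `E`-bimodules. -/
noncomputable def dbal {C D : Type} [AddCommGroup C] [Module K C]
    [AddCommGroup D] [Module K D] (A : EBim K V C) (B : EBim K V D) :
    Submodule K (C ⊗[K] D) :=
  Submodule.span K {z | ∃ (p : V × V) (c : C) (d : D),
    z = (A.eR p c) ⊗ₜ[K] d - c ⊗ₜ[K] (B.eL p d)}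

/-- The underlying vector space of `C ⊗_E D`. -/
noncomputable abbrev DTensor {C D : Type} [AddCommGroup C] [Module K C]
    [AddCommGroup D] [Module K D] (A : EBim K V C) (B : EBim K V D) : Type :=
  (C ⊗[K] D) ⧸ dbal K V A B

/-- The defining formulas for the `V`-dressed coalgebra structure on the tensor
product `C ⊗_E D` of two `V`-dressed coalgebras:
`Δ(c ⊗_E d) = Σ (c₍₁₎ ⊗_E d₍₁₎) ⊗ (c₍₂₎ ⊗_E d₍₂₎)`,
`ε(c ⊗_E d) = Σ_ν ε(cν) ε(νd)`, and the `E`-actions through the outer factors. -/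
def IsDTensorStruct {C D : Type} [AddCommGroup C] [Module K C]
    [AddCommGroup D] [Module K D] (DC : DressedStruct K V C) (DD : DressedStruct K V D)
    (DT : DressedStruct K V (DTensor K V DC.toEBim DD.toEBim)) : Prop :=
  (∀ (c : C) (d : D),
    DT.comul ((dbal K V DC.toEBim DD.toEBim).mkQ (c ⊗ₜ[K] d)) =
      (TensorProduct.map (dbal K V DC.toEBim DD.toEBim).mkQ
          (dbal K V DC.toEBim DD.toEBim).mkQ)
        ((TensorProduct.tensorTensorTensorComm K C C D D)
          (DC.comul c ⊗ₜ[K] DD.comul d))) ∧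
  (∀ (c : C) (d : D),
    DT.counit ((dbal K V DC.toEBim DD.toEBim).mkQ (c ⊗ₜ[K] d)) =
      ∑ n : V, DC.counit (DC.toEBim.pR n c) * DD.counit (DD.toEBim.pL n d)) ∧
  (∀ (p : V × V) (c : C) (d : D),
    DT.eL p ((dbal K V DC.toEBim DD.toEBim).mkQ (c ⊗ₜ[K] d)) =
      (dbal K V DC.toEBim DD.toEBim).mkQ ((DC.eL p c) ⊗ₜ[K] d)) ∧
  (∀ (p : V × V) (c : C) (d : D),
    DT.eR p ((dbal K V DC.toEBim DD.toEBim).mkQ (c ⊗ₜ[K] d)) =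
      (dbal K V DC.toEBim DD.toEBim).mkQ (c ⊗ₜ[K] (DD.eR p d)))

/-- The `V`-dressed coalgebra `E` itself: the defining formulas on the
canonical basis `{λ̊μ}` of `E = V × V → K`. -/
def IsEStruct (D : DressedStruct K V (V × V → K)) : Prop :=
  (∀ p : V × V, D.comul (Pi.single p 1) =
    ∑ n : V, (Pi.single (p.1, n) 1 : V × V → K) ⊗ₜ[K] (Pi.single (n, p.2) 1 : V × V → K)) ∧
  (∀ p : V × V, D.counit (Pi.single p 1) = if p.1 = p.2 then 1 else 0) ∧
  (∀ p q : V × V, D.eL p (Pi.single q 1) =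
    if p = q then (Pi.single q 1 : V × V → K) else 0) ∧
  (∀ p q : V × V, D.eR p (Pi.single q 1) =
    if p = q then (Pi.single q 1 : V × V → K) else 0)

end Dressed
section BmdR

open CategoryTheory

variable (K : Type) [Field K] (V : Type) [Fintype V] [DecidableEq V]

/-- A finite-dimensional `R`-bimodule, where `R = R_V` is the `K`-span of the
orthogonal idempotents `λ ∈ V`: a finite-dimensional `K`-vector space with
commuting unital left and right actions of `R`, encoded by the action
operators of the idempotents. -/
structure Bmd where
  M : Type
  [acg : AddCommGroup M]
  [mod : Module K M]
  [fd : FiniteDimensional K M]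
  /-- left action of `λ ∈ V` -/
  aL : V → M →ₗ[K] M
  /-- right action of `λ ∈ V` -/
  aR : V → M →ₗ[K] M
  aL_orth : ∀ l m : V, aL l ∘ₗ aL m = if l = m then aL l else 0
  aR_orth : ∀ l m : V, aR l ∘ₗ aR m = if l = m then aR l else 0
  aLR_comm : ∀ l m : V, aL l ∘ₗ aR m = aR m ∘ₗ aL l
  sum_aL : ∑ l : V, aL l = LinearMap.id
  sum_aR : ∑ l : V, aR l = LinearMap.id

attribute [instance] Bmd.acg Bmd.mod Bmd.fd

variable {K V}

/-- Maps of `R`-bimodules. -/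
def IsBmdMap (M N : Bmd K V) (f : M.M →ₗ[K] N.M) : Prop :=
  (∀ l : V, f ∘ₗ M.aL l = N.aL l ∘ₗ f) ∧ (∀ l : V, f ∘ₗ M.aR l = N.aR l ∘ₗ f)

variable (K V)

/-- The category `bmd(R)` of finite-dimensional `R`-bimodules. -/
noncomputable instance Bmd.category : Category (Bmd K V) where
  Hom M N := {f : M.M →ₗ[K] N.M // IsBmdMap M N f}
  id M := ⟨LinearMap.id, fun l => by simp, fun l => by simp⟩
  comp {M N P} f g := ⟨g.1 ∘ₗ f.1, by
    obtain ⟨fl, fr⟩ := f.2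
    obtain ⟨gl, gr⟩ := g.2
    constructor
    · intro l
      rw [LinearMap.comp_assoc, fl l, ← LinearMap.comp_assoc, gl l, LinearMap.comp_assoc]
    · intro l
      rw [LinearMap.comp_assoc, fr l, ← LinearMap.comp_assoc, gr l, LinearMap.comp_assoc]⟩
  id_comp f := Subtype.ext (LinearMap.comp_id f.1)
  comp_id f := Subtype.ext (LinearMap.id_comp f.1)
  assoc f g h := Subtype.ext (LinearMap.comp_assoc f.1 g.1 h.1).symm

variable {K V}

@[simp] lemma Bmd.id_coe (M : Bmd K V) : (𝟙 M : M ⟶ M).1 = LinearMap.id := rfl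

@[simp] lemma Bmd.comp_coe {M N P : Bmd K V} (f : M ⟶ N) (g : N ⟶ P) :
    (f ≫ g).1 = g.1 ∘ₗ f.1 := rfl

end BmdR

section Coend

open CategoryTheory

variable (K : Type) [Field K] (V : Type) [Fintype V] [DecidableEq V]
variable {C : Type} [SmallCategory C] (Ω : C ⥤ Bmd K V)

/-- The component `Ω(X)* ⊗ Ω(X)` of the functor whose coend is `C(Ω)`. -/
abbrev dMc (X : C) : Type := ((Ω.obj X).M →ₗ[K] K) ⊗[K] (Ω.obj X).M

/-- The free vector space on the pairs `(m*, m)` with `m* ∈ Ω(X)*`, `m ∈ Ω(X)`,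
`X ∈ ob C`. -/
abbrev PreCoend : Type :=
  (Σ X : C, ((Ω.obj X).M →ₗ[K] K) × (Ω.obj X).M) →₀ K

/-- The relations presenting the coend `C(Ω)` of `Ω* ⊗ Ω` as a quotient of the
free vector space `PreCoend`: bilinearity in `(m*, m)` and the coend
(dinaturality) relations `(f*(m*)) ⊗ m ∼ m* ⊗ f(m)`. -/
noncomputable def coendRel : Submodule K (PreCoend K V Ω) :=
  Submodule.span K
    ({z | ∃ (X : C) (g g' : (Ω.obj X).M →ₗ[K] K) (m : (Ω.obj X).M),
        z = Finsupp.single ⟨X, g + g', m⟩ (1 : K) -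
            Finsupp.single ⟨X, g, m⟩ 1 - Finsupp.single ⟨X, g', m⟩ 1} ∪
     {z | ∃ (X : C) (c : K) (g : (Ω.obj X).M →ₗ[K] K) (m : (Ω.obj X).M),
        z = Finsupp.single ⟨X, c • g, m⟩ (1 : K) -
            c • Finsupp.single ⟨X, g, m⟩ 1} ∪
     {z | ∃ (X : C) (g : (Ω.obj X).M →ₗ[K] K) (m m' : (Ω.obj X).M),
        z = Finsupp.single ⟨X, g, m + m'⟩ (1 : K) -
            Finsupp.single ⟨X, g, m⟩ 1 - Finsupp.single ⟨X, g, m'⟩ 1} ∪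
     {z | ∃ (X : C) (c : K) (g : (Ω.obj X).M →ₗ[K] K) (m : (Ω.obj X).M),
        z = Finsupp.single ⟨X, g, c • m⟩ (1 : K) -
            c • Finsupp.single ⟨X, g, m⟩ 1} ∪
     {z | ∃ (X Y : C) (f : X ⟶ Y) (g : (Ω.obj Y).M →ₗ[K] K) (m : (Ω.obj X).M),
        z = Finsupp.single ⟨X, g ∘ₗ (Ω.map f).1, m⟩ (1 : K) -
            Finsupp.single ⟨Y, g, (Ω.map f).1 m⟩ 1})

/-- The underlying vector space of the coend `C(Ω)` of `Ω* ⊗ Ω`. -/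
noncomputable abbrev CoendT : Type := PreCoend K V Ω ⧸ coendRel K V Ω

/-- The universal dinatural transformation
`κ_X : Ω(X)* ⊗ Ω(X) → C(Ω)`. -/
noncomputable def coendK (X : C) : dMc K V Ω X →ₗ[K] CoendT K V Ω :=
  TensorProduct.lift (LinearMap.mk₂ K
    (fun g m => (coendRel K V Ω).mkQ (Finsupp.single ⟨X, g, m⟩ (1 : K)))
    (fun g g' m => by
      beta_reduce
      rw [← map_add, Submodule.mkQ_apply, Submodule.mkQ_apply, Submodule.Quotient.eq]
      exact Submodule.subset_span (Or.inl (Or.inl (Or.inl (Or.inl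
        ⟨X, g, g', m, (sub_sub _ _ _).symm⟩)))))
    (fun c g m => by
      beta_reduce
      rw [← map_smul, Submodule.mkQ_apply, Submodule.mkQ_apply, Submodule.Quotient.eq]
      exact Submodule.subset_span (Or.inl (Or.inl (Or.inl (Or.inr ⟨X, c, g, m, rfl⟩)))))
    (fun g m m' => by
      beta_reduce
      rw [← map_add, Submodule.mkQ_apply, Submodule.mkQ_apply, Submodule.Quotient.eq]
      exact Submodule.subset_span (Or.inl (Or.inl (Or.inr
        ⟨X, g, m, m', (sub_sub _ _ _).symm⟩))))
    (fun c g m => by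
      beta_reduce
      rw [← map_smul, Submodule.mkQ_apply, Submodule.mkQ_apply, Submodule.Quotient.eq]
      exact Submodule.subset_span (Or.inl (Or.inr ⟨X, c, g, m, rfl⟩))))

/-- The coalgebra comultiplication on `C(Ω)` is determined by
`Δ(κ_X(m* ⊗ m)) = Σ_j κ_X(m* ⊗ m_j) ⊗ κ_X(m^j ⊗ m)` for any finite basis
`{m_j}` of `Ω(X)` with dual basis `{m^j}`. -/
def CoendComulSpec (comul : CoendT K V Ω →ₗ[K] CoendT K V Ω ⊗[K] CoendT K V Ω) : Prop :=
  ∀ (X : C) (ι : Type) (_ : Fintype ι) (b : Module.Basis ι K (Ω.obj X).M)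
    (g : (Ω.obj X).M →ₗ[K] K) (m : (Ω.obj X).M),
    comul (coendK K V Ω X (g ⊗ₜ[K] m)) =
      ∑ j : ι, (coendK K V Ω X (g ⊗ₜ[K] b j)) ⊗ₜ[K] (coendK K V Ω X (b.coord j ⊗ₜ[K] m))

/-- The counit of `C(Ω)` is determined by `ε(κ_X(m* ⊗ m)) = ⟨m*, m⟩`. -/
def CoendCounitSpec (counit : CoendT K V Ω →ₗ[K] K) : Prop :=
  ∀ (X : C) (g : (Ω.obj X).M →ₗ[K] K) (m : (Ω.obj X).M),
    counit (coendK K V Ω X (g ⊗ₜ[K] m)) = g m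

/-- The `E`-bimodule structure of `C(Ω)`, induced by
`λ̊μ (n ⊗ m) λ̊'μ' = λ̊ n λ̊' ⊗ μ m μ'` on `Ω(X)* ⊗ Ω(X)`. -/
def CoendBimSpec (B : EBim K V (CoendT K V Ω)) : Prop :=
  ∀ (p : V × V) (X : C) (g : (Ω.obj X).M →ₗ[K] K) (m : (Ω.obj X).M),
    B.eL p (coendK K V Ω X (g ⊗ₜ[K] m)) =
      coendK K V Ω X ((g ∘ₗ (Ω.obj X).aL p.1) ⊗ₜ[K] ((Ω.obj X).aL p.2 m)) ∧
    B.eR p (coendK K V Ω X (g ⊗ₜ[K] m)) =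
      coendK K V Ω X ((g ∘ₗ (Ω.obj X).aR p.1) ⊗ₜ[K] ((Ω.obj X).aR p.2 m))

/-- The full `V`-dressed coalgebra structure of the coend `C(Ω)`. -/
def CoendDressedSpec (D : DressedStruct K V (CoendT K V Ω)) : Prop :=
  CoendComulSpec K V Ω D.comul ∧ CoendCounitSpec K V Ω D.counit ∧
    CoendBimSpec K V Ω D.toEBim

/-- The right `C(Ω)`-comodule structure
`δ_X(m) = Σ_i m_i ⊗ κ_X(m^i ⊗ m)` on `Ω(X)`. -/
noncomputable def coendDelta (X : C) :
    (Ω.obj X).M →ₗ[K] (Ω.obj X).M ⊗[K] CoendT K V Ω :=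
  ∑ i, (TensorProduct.mk K (Ω.obj X).M (CoendT K V Ω)
      (Module.finBasis K (Ω.obj X).M i)) ∘ₗ coendK K V Ω X ∘ₗ
    (TensorProduct.mk K ((Ω.obj X).M →ₗ[K] K) (Ω.obj X).M
      ((Module.finBasis K (Ω.obj X).M).coord i))

end Coend

section LinearAlgebra

variable {R M N : Type*} [CommRing R] [AddCommGroup M] [Module R M] [AddCommGroup N] [Module R N]

theorem TensorProduct.ext_of_lid_rTensor_dual [Module.Free R M] {x y : M ⊗[R] N}
    (h : ∀ g : Module.Dual R M,
      TensorProduct.lid R N (g.rTensor N x) = TensorProduct.lid R N (g.rTensor N y)) :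
    x = y := by
  classical
  let b := Module.Free.chooseBasis R M
  refine (equivFinsuppOfBasisLeft b).injective (Finsupp.ext fun i => ?_)
  simp only [equivFinsuppOfBasisLeft_apply, h]

theorem TensorProduct.lid_rTensor_map {M' N' : Type*} [AddCommGroup M'] [Module R M']
    [AddCommGroup N'] [Module R N'] (g : Module.Dual R M') (f : M →ₗ[R] M') (h : N →ₗ[R] N')
    (x : M ⊗[R] N) :
    TensorProduct.lid R N' (g.rTensor N' (map f h x)) =
      h (TensorProduct.lid R N ((g ∘ₗ f).rTensor N x)) := by
  induction x using TensorProduct.induction_on <;> simp_all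

theorem LinearEquiv.apply_symm_of_intertwine {M' N' : Type*} [AddCommGroup M'] [Module R M']
    [AddCommGroup N'] [Module R N'] (e : M ≃ₗ[R] M') (e' : N ≃ₗ[R] N')
    {a : M → N} {a' : M' → N'} (h : ∀ x, e' (a x) = a' (e x)) (y : M') :
    a (e.symm y) = e'.symm (a' y) := by
  rw [e'.eq_symm_apply, h, e.apply_symm_apply]

end LinearAlgebra

section CoendUniversal

open CategoryTheory

variable {K : Type} [Field K] {V : Type} [Fintype V] [DecidableEq V]
variable {C : Type} [SmallCategory C] {Ω : C ⥤ Bmd K V}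
variable {W : Type} [AddCommGroup W] [Module K W]

theorem coendK_tmul (X : C) (g : (Ω.obj X).M →ₗ[K] K) (m : (Ω.obj X).M) :
    coendK K V Ω X (g ⊗ₜ m) = (coendRel K V Ω).mkQ (Finsupp.single ⟨X, g, m⟩ 1) :=
  rfl

theorem coendK_dinat {X Y : C} (f : X ⟶ Y) (g : (Ω.obj Y).M →ₗ[K] K) (m : (Ω.obj X).M) :
    coendK K V Ω X ((g ∘ₗ (Ω.map f).1) ⊗ₜ m) = coendK K V Ω Y (g ⊗ₜ (Ω.map f).1 m) := by
  rw [coendK_tmul, coendK_tmul, Submodule.mkQ_apply, Submodule.mkQ_apply, Submodule.Quotient.eq]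
  exact Submodule.subset_span (Or.inr ⟨X, Y, f, g, m, rfl⟩)

theorem coendT_hom_ext {φ ψ : CoendT K V Ω →ₗ[K] W}
    (h : ∀ (X : C) (g : (Ω.obj X).M →ₗ[K] K) (m : (Ω.obj X).M),
      φ (coendK K V Ω X (g ⊗ₜ m)) = ψ (coendK K V Ω X (g ⊗ₜ m))) : φ = ψ :=
  Submodule.linearMap_qext _ (Finsupp.lhom_ext' fun ⟨X, g, m⟩ => LinearMap.ext_ring (h X g m))

noncomputable def coendDesc (φ : ∀ X : C, dMc K V Ω X →ₗ[K] W)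
    (hφ : ∀ (X Y : C) (f : X ⟶ Y) (g : (Ω.obj Y).M →ₗ[K] K) (m : (Ω.obj X).M),
      φ X ((g ∘ₗ (Ω.map f).1) ⊗ₜ m) = φ Y (g ⊗ₜ (Ω.map f).1 m)) :
    CoendT K V Ω →ₗ[K] W :=
  (coendRel K V Ω).liftQ (Finsupp.linearCombination K fun s => φ s.1 (s.2.1 ⊗ₜ s.2.2)) <| by
    rw [coendRel, Submodule.span_le]
    rintro z ((((⟨X, g, g', m, rfl⟩ | ⟨X, c, g, m, rfl⟩) | ⟨X, g, m, m', rfl⟩) |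
      ⟨X, c, g, m, rfl⟩) | ⟨X, Y, f, g, m, rfl⟩) <;>
    simp only [SetLike.mem_coe, LinearMap.mem_ker, map_sub, map_smul,
      Finsupp.linearCombination_single, one_smul, add_tmul, tmul_add, ← smul_tmul', tmul_smul,
      map_add, hφ] <;> abel

theorem coendDesc_coendK (φ : ∀ X : C, dMc K V Ω X →ₗ[K] W)
    (hφ : ∀ (X Y : C) (f : X ⟶ Y) (g : (Ω.obj Y).M →ₗ[K] K) (m : (Ω.obj X).M),
      φ X ((g ∘ₗ (Ω.map f).1) ⊗ₜ m) = φ Y (g ⊗ₜ (Ω.map f).1 m))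
    (X : C) (g : (Ω.obj X).M →ₗ[K] K) (m : (Ω.obj X).M) :
    coendDesc φ hφ (coendK K V Ω X (g ⊗ₜ m)) = φ X (g ⊗ₜ m) := by
  simp [coendDesc, coendK_tmul]

theorem lid_rTensor_coendDelta (X : C) (g : (Ω.obj X).M →ₗ[K] K) (m : (Ω.obj X).M) :
    TensorProduct.lid K (CoendT K V Ω) (g.rTensor _ (coendDelta K V Ω X m)) =
      coendK K V Ω X (g ⊗ₜ m) := by
  let b := Module.finBasis K (Ω.obj X).M
  calc TensorProduct.lid K (CoendT K V Ω) (g.rTensor _ (coendDelta K V Ω X m))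
      = ∑ i, g (b i) • coendK K V Ω X (b.coord i ⊗ₜ m) := by simp [coendDelta, b, map_sum]
    _ = coendK K V Ω X ((∑ i, g (b i) • b.coord i) ⊗ₜ m) := by
      simp only [sum_tmul, map_sum, ← smul_tmul', map_smul]
    _ = coendK K V Ω X (g ⊗ₜ m) := by rw [b.sum_dual_apply_smul_coord]

end CoendUniversal

section Stmt14

open CategoryTheory

variable (K : Type) [Field K] (V : Type) [Fintype V] [DecidableEq V]
variable {C C' : Type} [SmallCategory C] [SmallCategory C']
variable (Ω : C ⥤ Bmd K V) (Ω' : C' ⥤ Bmd K V)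

/-- The commuting square `(ζ_X ⊗ C(F, ζ)) ∘ δ^Ω_X = δ^{Ω'}_{F(X)} ∘ ζ_X`
characterising the induced map on coends. -/
def CMapSquare (F : C ⥤ C')
    (ζ : ∀ X : C, (Ω.obj X).M ≃ₗ[K] (Ω'.obj (F.obj X)).M)
    (h : CoendT K V Ω →ₗ[K] CoendT K V Ω') : Prop :=
  ∀ (X : C) (m : (Ω.obj X).M),
    (TensorProduct.map (ζ X).toLinearMap h) (coendDelta K V Ω X m) =
      coendDelta K V Ω' (F.obj X) (ζ X m)

section InducedMap

variable {K V Ω Ω'} (F : C ⥤ C') (ζ : ∀ X : C, (Ω.obj X).M ≃ₗ[K] (Ω'.obj (F.obj X)).M)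

/-- The map `C(F, ζ)`. -/
noncomputable def coendMap
    (hnat : ∀ (X Y : C) (f : X ⟶ Y) (x : (Ω.obj X).M),
      ζ Y ((Ω.map f).1 x) = (Ω'.map (F.map f)).1 (ζ X x)) :
    CoendT K V Ω →ₗ[K] CoendT K V Ω' :=
  coendDesc
    (fun X => coendK K V Ω' (F.obj X) ∘ₗ map (ζ X).symm.toLinearMap.dualMap (ζ X).toLinearMap)
    (fun X Y f g m => by
      have hg : g ∘ₗ (Ω.map f).1 ∘ₗ (ζ X).symm.toLinearMap =
          (g ∘ₗ (ζ Y).symm.toLinearMap) ∘ₗ (Ω'.map (F.map f)).1 :=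
        LinearMap.ext fun y => congrArg g ((ζ X).apply_symm_of_intertwine (ζ Y) (hnat X Y f) y)
      simp only [LinearMap.comp_apply, map_tmul, LinearMap.dualMap_apply', LinearEquiv.coe_coe]
      rw [LinearMap.comp_assoc, hg, hnat, coendK_dinat])

variable (hnat : ∀ (X Y : C) (f : X ⟶ Y) (x : (Ω.obj X).M),
      ζ Y ((Ω.map f).1 x) = (Ω'.map (F.map f)).1 (ζ X x))

theorem coendMap_coendK (X : C) (g : (Ω.obj X).M →ₗ[K] K) (m : (Ω.obj X).M) :
    coendMap F ζ hnat (coendK K V Ω X (g ⊗ₜ m)) =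
      coendK K V Ω' (F.obj X) ((g ∘ₗ (ζ X).symm.toLinearMap) ⊗ₜ ζ X m) :=
  coendDesc_coendK _ _ X g m

theorem cMapSquare_iff (h : CoendT K V Ω →ₗ[K] CoendT K V Ω') :
    CMapSquare K V Ω Ω' F ζ h ↔ ∀ (X : C) (g : (Ω.obj X).M →ₗ[K] K) (m : (Ω.obj X).M),
      h (coendK K V Ω X (g ⊗ₜ m)) =
        coendK K V Ω' (F.obj X) ((g ∘ₗ (ζ X).symm.toLinearMap) ⊗ₜ ζ X m) := by
  constructor
  · intro hsq X g m
    have := congrArg (fun t => TensorProduct.lid K _ ((g ∘ₗ (ζ X).symm.toLinearMap).rTensor _ t))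
      (hsq X m)
    simpa only [TensorProduct.lid_rTensor_map, LinearMap.comp_assoc, LinearEquiv.symm_comp,
      LinearMap.comp_id, lid_rTensor_coendDelta] using this
  · intro hκ X m
    refine TensorProduct.ext_of_lid_rTensor_dual fun g => ?_
    rw [TensorProduct.lid_rTensor_map, lid_rTensor_coendDelta, lid_rTensor_coendDelta, hκ,
      LinearMap.comp_assoc, LinearEquiv.comp_symm, LinearMap.comp_id]

theorem cMapSquare_coendMap : CMapSquare K V Ω Ω' F ζ (coendMap F ζ hnat) :=
  (cMapSquare_iff F ζ _).2 (coendMap_coendK F ζ hnat)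

theorem eq_coendMap_of_cMapSquare {h : CoendT K V Ω →ₗ[K] CoendT K V Ω'}
    (hsq : CMapSquare K V Ω Ω' F ζ h) : h = coendMap F ζ hnat :=
  coendT_hom_ext fun X g m => by rw [(cMapSquare_iff F ζ h).1 hsq, coendMap_coendK]

theorem coendMap_comul {comul : CoendT K V Ω →ₗ[K] CoendT K V Ω ⊗[K] CoendT K V Ω}
    {comul' : CoendT K V Ω' →ₗ[K] CoendT K V Ω' ⊗[K] CoendT K V Ω'}
    (hc : CoendComulSpec K V Ω comul) (hc' : CoendComulSpec K V Ω' comul')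
    (c : CoendT K V Ω) :
    comul' (coendMap F ζ hnat c) = map (coendMap F ζ hnat) (coendMap F ζ hnat) (comul c) := by
  suffices comul' ∘ₗ coendMap F ζ hnat = map (coendMap F ζ hnat) (coendMap F ζ hnat) ∘ₗ comul
    from LinearMap.congr_fun this c
  refine coendT_hom_ext fun X g m => ?_
  let b := Module.finBasis K (Ω.obj X).M
  have hcoord : ∀ j, b.coord j ∘ₗ (ζ X).symm.toLinearMap = (b.map (ζ X)).coord j := fun j =>
    LinearMap.ext fun y => by simp [Module.Basis.coord_apply, Module.Basis.map_repr]
  simp only [LinearMap.comp_apply, coendMap_coendK, hc X _ _ b, hc' (F.obj X) _ _ (b.map (ζ X)),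
    map_sum, map_tmul, hcoord, Module.Basis.map_apply]

theorem coendMap_counit {counit : CoendT K V Ω →ₗ[K] K} {counit' : CoendT K V Ω' →ₗ[K] K}
    (he : CoendCounitSpec K V Ω counit) (he' : CoendCounitSpec K V Ω' counit')
    (c : CoendT K V Ω) :
    counit' (coendMap F ζ hnat c) = counit c := by
  suffices counit' ∘ₗ coendMap F ζ hnat = counit from LinearMap.congr_fun this c
  refine coendT_hom_ext fun X g m => ?_
  rw [LinearMap.comp_apply, coendMap_coendK, he', he]
  simp

theorem coendMap_coendK_act (X : C) {a : V → (Ω.obj X).M →ₗ[K] (Ω.obj X).M}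
    {a' : V → (Ω'.obj (F.obj X)).M →ₗ[K] (Ω'.obj (F.obj X)).M}
    (ha : ∀ l x, ζ X (a l x) = a' l (ζ X x)) (l l' : V) (g : (Ω.obj X).M →ₗ[K] K)
    (m : (Ω.obj X).M) :
    coendMap F ζ hnat (coendK K V Ω X ((g ∘ₗ a l) ⊗ₜ a l' m)) =
      coendK K V Ω' (F.obj X) (((g ∘ₗ (ζ X).symm.toLinearMap) ∘ₗ a' l) ⊗ₜ a' l' (ζ X m)) := by
  have hg : (g ∘ₗ a l) ∘ₗ (ζ X).symm.toLinearMap = (g ∘ₗ (ζ X).symm.toLinearMap) ∘ₗ a' l :=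
    LinearMap.ext fun y => congrArg g ((ζ X).apply_symm_of_intertwine (ζ X) (ha l) y)
  rw [coendMap_coendK, hg, ha]

theorem coendMap_bimod
    (hbim : ∀ (X : C) (l : V) (x : (Ω.obj X).M),
      ζ X ((Ω.obj X).aL l x) = (Ω'.obj (F.obj X)).aL l (ζ X x) ∧
      ζ X ((Ω.obj X).aR l x) = (Ω'.obj (F.obj X)).aR l (ζ X x))
    {B : EBim K V (CoendT K V Ω)} {B' : EBim K V (CoendT K V Ω')}
    (hB : CoendBimSpec K V Ω B) (hB' : CoendBimSpec K V Ω' B') :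
    (∀ p c, coendMap F ζ hnat (B.eL p c) = B'.eL p (coendMap F ζ hnat c)) ∧
      ∀ p c, coendMap F ζ hnat (B.eR p c) = B'.eR p (coendMap F ζ hnat c) := by
  refine ⟨fun p => LinearMap.congr_fun (coendT_hom_ext (φ := coendMap F ζ hnat ∘ₗ B.eL p)
      (ψ := B'.eL p ∘ₗ coendMap F ζ hnat) fun X g m => ?_),
    fun p => LinearMap.congr_fun (coendT_hom_ext (φ := coendMap F ζ hnat ∘ₗ B.eR p)
      (ψ := B'.eR p ∘ₗ coendMap F ζ hnat) fun X g m => ?_)⟩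
  · simp only [LinearMap.comp_apply, (hB p X g m).1, coendMap_coendK_act F ζ hnat X
      (fun l x => (hbim X l x).1), coendMap_coendK, (hB' p _ _ _).1]
  · simp only [LinearMap.comp_apply, (hB p X g m).2, coendMap_coendK_act F ζ hnat X
      (fun l x => (hbim X l x).2), coendMap_coendK, (hB' p _ _ _).2]

theorem isDrMap_coendMap
    (hbim : ∀ (X : C) (l : V) (x : (Ω.obj X).M),
      ζ X ((Ω.obj X).aL l x) = (Ω'.obj (F.obj X)).aL l (ζ X x) ∧
      ζ X ((Ω.obj X).aR l x) = (Ω'.obj (F.obj X)).aR l (ζ X x))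
    {D : DressedStruct K V (CoendT K V Ω)} {D' : DressedStruct K V (CoendT K V Ω')}
    (hD : CoendDressedSpec K V Ω D) (hD' : CoendDressedSpec K V Ω' D') :
    IsDrMap K V D D' (coendMap F ζ hnat) :=
  ⟨coendMap_comul F ζ hnat hD.1 hD'.1, coendMap_counit F ζ hnat hD.2.1 hD'.2.1,
    coendMap_bimod F ζ hnat hbim hD.2.2 hD'.2.2⟩

end InducedMap

/-- STATEMENT 14: a map `(F, ζ) : (C, Ω) → (C', Ω')` of categories with
`V`-faces induces a unique map `C(F, ζ) : C(Ω) → C(Ω')` of `V`-dressed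
coalgebras such that `(ζ_X ⊗ C(F, ζ)) ∘ δ^Ω_X = δ^{Ω'}_{F(X)} ∘ ζ_X` for all
`X`. -/
theorem coend_functorial_exists_unique (F : C ⥤ C')
    (ζ : ∀ X : C, (Ω.obj X).M ≃ₗ[K] (Ω'.obj (F.obj X)).M)
    (hbim : ∀ (X : C) (l : V) (x : (Ω.obj X).M),
      ζ X ((Ω.obj X).aL l x) = (Ω'.obj (F.obj X)).aL l (ζ X x) ∧
      ζ X ((Ω.obj X).aR l x) = (Ω'.obj (F.obj X)).aR l (ζ X x))
    (hnat : ∀ (X Y : C) (f : X ⟶ Y) (x : (Ω.obj X).M),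
      ζ Y ((Ω.map f).1 x) = (Ω'.map (F.map f)).1 (ζ X x))
    (D : DressedStruct K V (CoendT K V Ω)) (hD : CoendDressedSpec K V Ω D)
    (D' : DressedStruct K V (CoendT K V Ω')) (hD' : CoendDressedSpec K V Ω' D') :
    ∃ h : CoendT K V Ω →ₗ[K] CoendT K V Ω',
      (IsDrMap K V D D' h ∧ CMapSquare K V Ω Ω' F ζ h) ∧
      ∀ h' : CoendT K V Ω →ₗ[K] CoendT K V Ω',
        IsDrMap K V D D' h' → CMapSquare K V Ω Ω' F ζ h' → h' = h := by
  exact ⟨coendMap F ζ hnat, ⟨isDrMap_coendMap F ζ hnat hbim hD hD', cMapSquare_coendMap F ζ hnat⟩,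
    fun _ _ hsq => eq_coendMap_of_cMapSquare F ζ hnat hsq⟩

end Stmt14
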